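/- Let Y ∈ ℝ^{n×p}, ρ > 0, and W̄ = Yᵀ((1/ρ)I + YYᵀ)⁻¹Y. Then W̄² ⪯ (ρσ/(1+ρσ)) W̄, where σ = λ_max(YYᵀ) and ⪯ denotes the Loewner order. -/

import Mathlib

/-!
Write `A = ρ⁻¹ I + Y Yᵀ` and `c = ρσ / (1 + ρσ)`. Since `A` is symmetric, `A (A⁻¹ Y) = Y` gives
`c W̄ - W̄² = (A⁻¹ Y)ᵀ (c A - Y Yᵀ) (A⁻¹ Y)`, so it suffices that `c A - Y Yᵀ` is positive
semidefinite. But `c A - Y Yᵀ = (1 + ρσ)⁻¹ (σ I - Y Yᵀ)`, and `σ I - Y Yᵀ ⪰ 0` because every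
eigenvalue of `Y Yᵀ` is at most `σ`.
-/

open Matrix
open scoped ComplexOrder

namespace Matrix

variable {m n : Type*} [Fintype m] [Fintype n]

theorem PosSemidef.nonneg_of_mulVec_eq_smul {A : Matrix n n ℝ} (hA : A.PosSemidef) {v : n → ℝ}
    (hv : v ≠ 0) {r : ℝ} (h : A *ᵥ v = r • v) : 0 ≤ r := by
  have hquad := hA.dotProduct_mulVec_nonneg v
  rw [h, star_trivial, dotProduct_smul, smul_eq_mul] at hquad
  exact nonneg_of_mul_nonneg_left hquad (by simpa using dotProduct_star_self_pos_iff.mpr hv)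

variable [DecidableEq n]

theorem IsHermitian.posSemidef_smul_one_sub {𝕜 : Type*} [RCLike 𝕜] {H : Matrix n n 𝕜}
    (hH : H.IsHermitian) {σ : ℝ} (h : ∀ i, hH.eigenvalues i ≤ σ) :
    (σ • 1 - H).PosSemidef := by
  have hconj : σ • 1 - H = Unitary.conjStarAlgAut 𝕜 _ hH.eigenvectorUnitary
      (diagonal fun i => ((σ - hH.eigenvalues i : ℝ) : 𝕜)) := by
    conv_lhs => rw [hH.spectral_theorem, RCLike.real_smul_eq_coe_smul (K := 𝕜)]
    rw [← map_one (Unitary.conjStarAlgAut 𝕜 _ hH.eigenvectorUnitary), ← map_smul, ← map_sub,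
      smul_one_eq_diagonal, diagonal_sub]
    simp
  rw [hconj, Unitary.conjStarAlgAut_apply, Unitary.isUnit_coe.posSemidef_star_right_conjugate_iff]
  exact posSemidef_diagonal_iff.mpr fun i => by simpa using h i

theorem IsHermitian.posSemidef_smul_one_sub_of_mem_upperBounds {H : Matrix n n ℝ}
    (hH : H.IsHermitian) {σ : ℝ}
    (hσ : σ ∈ upperBounds {r : ℝ | ∃ v : n → ℝ, v ≠ 0 ∧ H *ᵥ v = r • v}) :
    (σ • 1 - H).PosSemidef :=
  hH.posSemidef_smul_one_sub fun i =>
    hσ ⟨_, fun h => hH.eigenvectorBasis.orthonormal.ne_zero i (by ext1 j; exact congrFun h j),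
      hH.mulVec_eigenvectorBasis i⟩

theorem smul_sub_mul_self_transpose_mul_inv_mul {R : Type*} [CommRing R] {A : Matrix n n R}
    (hA : IsUnit A.det) (hAT : Aᵀ = A) (Y : Matrix n m R) (c : R) :
    c • (Yᵀ * A⁻¹ * Y) - Yᵀ * A⁻¹ * Y * (Yᵀ * A⁻¹ * Y)
      = (A⁻¹ * Y)ᵀ * (c • A - Y * Yᵀ) * (A⁻¹ * Y) := by
  have hcancel : A * (A⁻¹ * Y) = Y := by
    rw [← Matrix.mul_assoc, mul_nonsing_inv A hA, Matrix.one_mul]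
  simp only [transpose_mul, transpose_nonsing_inv, hAT, Matrix.mul_sub, Matrix.sub_mul,
    Matrix.mul_smul, Matrix.smul_mul, Matrix.mul_assoc, hcancel]

theorem PosDef.posSemidef_smul_sub_mul_self {A : Matrix n n ℝ} (hA : A.PosDef)
    {Y : Matrix n m ℝ} {c : ℝ} (hc : (c • A - Y * Yᵀ).PosSemidef) :
    (c • (Yᵀ * A⁻¹ * Y) - Yᵀ * A⁻¹ * Y * (Yᵀ * A⁻¹ * Y)).PosSemidef := by
  rw [smul_sub_mul_self_transpose_mul_inv_mul hA.det_pos.ne'.isUnit hA.isHermitian Y c]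
  simpa using hc.conjTranspose_mul_mul_same (A⁻¹ * Y)

end Matrix

theorem div_smul_inv_smul_add_sub {K M : Type*} [Field K] [AddCommGroup M] [Module K M]
    {ρ σ : K} (hρ : ρ ≠ 0) (hρσ : 1 + ρ * σ ≠ 0) (x y : M) :
    (ρ * σ / (1 + ρ * σ)) • (ρ⁻¹ • x + y) - y = (1 + ρ * σ)⁻¹ • (σ • x - y) := by
  match_scalars
  · field_simp
  · field_simp
    ring

theorem stmt_9 {n p : ℕ} (Y : Matrix (Fin n) (Fin p) ℝ) (ρ σ : ℝ) (hρ : 0 < ρ)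
    (hσ : IsGreatest {r : ℝ | ∃ v : Fin n → ℝ, v ≠ 0 ∧ (Y * Yᵀ) *ᵥ v = r • v} σ) :
    let Wbar := Yᵀ * (ρ⁻¹ • (1 : Matrix (Fin n) (Fin n) ℝ) + Y * Yᵀ)⁻¹ * Y
    ((ρ * σ / (1 + ρ * σ)) • Wbar - Wbar * Wbar).PosSemidef := by
  intro Wbar
  have hYY : (Y * Yᵀ).PosSemidef := by simpa using posSemidef_self_mul_conjTranspose Y
  have hσ0 : 0 ≤ σ := by
    obtain ⟨v, hv, hYYv⟩ := hσ.1
    exact hYY.nonneg_of_mulVec_eq_smul hv hYYv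
  have hA : (ρ⁻¹ • (1 : Matrix (Fin n) (Fin n) ℝ) + Y * Yᵀ).PosDef :=
    (PosDef.one.smul (inv_pos.mpr hρ)).add_posSemidef hYY
  refine hA.posSemidef_smul_sub_mul_self ?_
  rw [div_smul_inv_smul_add_sub hρ.ne' (by positivity)]
  exact (hYY.isHermitian.posSemidef_smul_one_sub_of_mem_upperBounds hσ.2).smul
    (by positivity)
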